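/- If X has more than 2 elements, the majorization preorder on K(X) does not admit least upper bounds in general: there is a finite family of stochastic matrices with domain X that has upper bounds but no least upper bound. -/

import Mathlib

def IsStochastic {X Y : Type*} [Fintype Y] (κ : Matrix X Y ℝ) : Prop :=
  (∀ x y, 0 ≤ κ x y) ∧ ∀ x, ∑ y, κ x y = 1

/-- Majorization (Blackwell/degradation) order: \`μ\` can be obtained from \`κ\`
by post-composing with a stochastic matrix. -/
def Maj {X Y Z : Type*} [Fintype Y] [Fintype Z]
    (κ : Matrix X Y ℝ) (μ : Matrix X Z ℝ) : Prop :=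
  ∃ lam : Matrix Y Z ℝ, IsStochastic lam ∧ μ = κ * lam

/-!
Write `Z_κ = κ [0,1]^Y` (`zonotope κ`) and `μ_(v)` (`dichotomy v`) for the stochastic matrix with
columns `v` and `1 - v`. Then `κ ⪰ μ_(v)` iff `v ∈ Z_κ`, and `κ ⪰ κ'` gives `Z_{κ'} ⊆ Z_κ`.
On `Fin 3` the functional `θ(y) = y₀ - y₂` is at most `1/2` on `Z_{κ₁}` and equals `1/2` at three
vertices `v_i` of `Z_{κ₁} ∩ Z_{κ₂}`. A least upper bound `κ` of the `μ_(v_i)` would satisfy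
`v_i ∈ Z_κ ⊆ Z_{κ₁} ∩ Z_{κ₂}`, so every `v_i` lies on the `θ`-maximal face of `Z_κ`. That face is
itself a zonotope, hence symmetric about some centre `m`, so the reflections `2m - v_i` also lie in
`Z_{κ₁} ∩ Z_{κ₂}` on `θ = 1/2`, and the explicit shape of the two zonotopes forbids this.
A larger domain reduces to `Fin 3` by pulling back along a retraction onto three of its points.
-/

open Matrix Set

section Zonotope

variable {X X' Y Z : Type*} [Fintype Y] [Fintype Z]

def zonotope (κ : Matrix X Y ℝ) : Set (X → ℝ) := κ.mulVec '' Icc 0 1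

def dichotomy (v : X → ℝ) : Matrix X (Fin 2) ℝ := Matrix.of fun x => ![v x, 1 - v x]

lemma IsStochastic.le_one {κ : Matrix X Y ℝ} (hκ : IsStochastic κ) (x : X) (y : Y) :
    κ x y ≤ 1 :=
  calc κ x y ≤ ∑ y', κ x y' := Finset.single_le_sum (fun y' _ => hκ.1 x y') (Finset.mem_univ y)
    _ = 1 := hκ.2 x

lemma IsStochastic.mulVec_mem_Icc {κ : Matrix X Y ℝ} (hκ : IsStochastic κ) {u : Y → ℝ}
    (hu : u ∈ Icc 0 1) : κ *ᵥ u ∈ Icc 0 1 := by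
  refine ⟨fun x => Finset.sum_nonneg fun y _ => mul_nonneg (hκ.1 x y) (hu.1 y), fun x => ?_⟩
  calc (κ *ᵥ u) x ≤ ∑ y, κ x y * 1 :=
        Finset.sum_le_sum fun y _ => mul_le_mul_of_nonneg_left (hu.2 y) (hκ.1 x y)
    _ = 1 := by simpa using hκ.2 x

lemma IsStochastic.submatrix {κ : Matrix X Y ℝ} (hκ : IsStochastic κ) (f : X' → X) :
    IsStochastic (κ.submatrix f id) :=
  ⟨fun x => hκ.1 (f x), fun x => hκ.2 (f x)⟩

lemma isStochastic_dichotomy {v : X → ℝ} (hv : v ∈ Icc 0 1) : IsStochastic (dichotomy v) := by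
  refine ⟨fun x j => ?_, fun x => by simp [dichotomy]⟩
  fin_cases j
  · simpa [dichotomy] using hv.1 x
  · simpa [dichotomy] using hv.2 x

lemma zonotope_subset_Icc {κ : Matrix X Y ℝ} (hκ : IsStochastic κ) : zonotope κ ⊆ Icc 0 1 := by
  rintro _ ⟨u, hu, rfl⟩
  exact hκ.mulVec_mem_Icc hu

lemma Maj.zonotope_subset {κ : Matrix X Y ℝ} {κ' : Matrix X Z ℝ} (h : Maj κ κ') :
    zonotope κ' ⊆ zonotope κ := by
  obtain ⟨lam, hlam, rfl⟩ := h
  rintro _ ⟨u, hu, rfl⟩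
  exact ⟨lam *ᵥ u, hlam.mulVec_mem_Icc hu, mulVec_mulVec u κ lam⟩

lemma Maj.submatrix {κ : Matrix X Y ℝ} {μ : Matrix X Z ℝ} (h : Maj κ μ) (f : X' → X) :
    Maj (κ.submatrix f id) (μ.submatrix f id) := by
  obtain ⟨lam, hlam, rfl⟩ := h
  exact ⟨lam, hlam, rfl⟩

lemma maj_dichotomy_iff {κ : Matrix X Y ℝ} (hκ : IsStochastic κ) {v : X → ℝ} :
    Maj κ (dichotomy v) ↔ v ∈ zonotope κ := by
  constructor
  · rintro ⟨lam, hlam, hv⟩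
    refine ⟨fun y => lam y 0, ⟨fun y => hlam.1 y 0, fun y => hlam.le_one y 0⟩, funext fun x => ?_⟩
    simpa [dichotomy, mul_apply, mulVec, dotProduct] using (congrFun (congrFun hv x) 0).symm
  · rintro ⟨u, hu, rfl⟩
    refine ⟨dichotomy u, isStochastic_dichotomy hu, ?_⟩
    ext x j
    fin_cases j
    · simp [dichotomy, mul_apply, mulVec, dotProduct]
    · simp [dichotomy, mul_apply, mulVec, dotProduct, mul_sub, Finset.sum_sub_distrib, hκ.2 x]

lemma mul_sub_nonpos_of_forall_dotProduct_le {s u : Y → ℝ} (hu : u ∈ Icc 0 1)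
    (hmax : ∀ u' ∈ Icc (0 : Y → ℝ) 1, s ⬝ᵥ u' ≤ s ⬝ᵥ u) (j : Y) (t : ℝ) (ht : t ∈ Icc 0 1) :
    s j * (t - u j) ≤ 0 := by
  classical
  have hmem : u + Pi.single j (t - u j) ∈ Icc (0 : Y → ℝ) 1 := by
    constructor <;> intro y <;> by_cases hy : y = j <;>
      simp [hy, ht.1, ht.2, show 0 ≤ u y from hu.1 y, show u y ≤ 1 from hu.2 y]
  simpa [dotProduct_add, dotProduct_single] using hmax _ hmem

lemma exists_center_of_maximal_face [Fintype X] (κ : Matrix X Y ℝ) (φ : X → ℝ) :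
    ∃ m : X → ℝ, ∀ v ∈ zonotope κ, (∀ v' ∈ zonotope κ, φ ⬝ᵥ v' ≤ φ ⬝ᵥ v) →
      2 • m - v ∈ zonotope κ ∧ φ ⬝ᵥ (2 • m - v) = φ ⬝ᵥ v := by
  set s := φ ᵥ* κ
  -- the centre of the face of `[0,1]^Y` on which `s ⬝ᵥ ·` is maximal
  let w : Y → ℝ := fun j => if 0 < s j then 1 else if s j < 0 then 0 else 1 / 2
  refine ⟨κ *ᵥ w, ?_⟩
  rintro _ ⟨u, hu, rfl⟩ hmax
  have hmax' : ∀ u' ∈ Icc (0 : Y → ℝ) 1, s ⬝ᵥ u' ≤ s ⬝ᵥ u := fun u' hu' => by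
    simpa only [dotProduct_mulVec] using hmax _ ⟨u', hu', rfl⟩
  have hface : ∀ j, (2 • w - u) j ∈ Icc 0 1 ∧ s j * (2 • w - u) j = s j * u j := by
    intro j
    have hle := mul_sub_nonpos_of_forall_dotProduct_le hu hmax' j
    rcases lt_trichotomy (s j) 0 with hj | hj | hj
    · have : u j = 0 := le_antisymm (by nlinarith [hle 0 (by simp)]) (hu.1 j)
      simp [w, hj, hj.not_gt, this]
    · simpa [w, hj] using ⟨hu.2 j, hu.1 j⟩
    · have : u j = 1 := le_antisymm (hu.2 j) (by nlinarith [hle 1 (by simp)])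
      norm_num [w, hj, this]
  have hreflect : κ *ᵥ (2 • w - u) = 2 • (κ *ᵥ w) - κ *ᵥ u := by
    rw [mulVec_sub, mulVec_smul]
  refine ⟨⟨2 • w - u, ⟨fun j => (hface j).1.1, fun j => (hface j).1.2⟩, hreflect⟩, ?_⟩
  rw [← hreflect, dotProduct_mulVec, dotProduct_mulVec]
  exact Finset.sum_congr rfl fun j _ => (hface j).2

section LeastUpperBound

variable {ι : Type*} {m : ι → ℕ}

def IsMajUpperBound (μ : ∀ i, Matrix X (Fin (m i)) ℝ) {n : ℕ} (κ : Matrix X (Fin n) ℝ) : Prop :=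
  IsStochastic κ ∧ ∀ i, Maj κ (μ i)

def IsMajLUB (μ : ∀ i, Matrix X (Fin (m i)) ℝ) {n : ℕ} (κ : Matrix X (Fin n) ℝ) : Prop :=
  IsMajUpperBound μ κ ∧
    ∀ (n' : ℕ) (κ' : Matrix X (Fin n') ℝ), IsMajUpperBound μ κ' → Maj κ' κ

lemma IsMajUpperBound.submatrix {μ : ∀ i, Matrix X (Fin (m i)) ℝ} {n : ℕ}
    {κ : Matrix X (Fin n) ℝ} (h : IsMajUpperBound μ κ) (f : X' → X) :
    IsMajUpperBound (fun i => (μ i).submatrix f id) (κ.submatrix f id) :=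
  ⟨h.1.submatrix f, fun i => (h.2 i).submatrix f⟩

lemma IsMajLUB.submatrix_of_leftInverse {μ : ∀ i, Matrix X' (Fin (m i)) ℝ} {n : ℕ}
    {κ : Matrix X (Fin n) ℝ} {p : X → X'} {q : X' → X} (hpq : Function.LeftInverse p q)
    (h : IsMajLUB (fun i => (μ i).submatrix p id) κ) : IsMajLUB μ (κ.submatrix q id) := by
  have hμ : ∀ i, ((μ i).submatrix p id).submatrix q id = μ i := fun i => by
    rw [submatrix_submatrix, hpq.comp_eq_id, Function.comp_id, submatrix_id_id]
  refine ⟨?_, fun n' κ' hκ' => ?_⟩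
  · simpa only [hμ] using h.1.submatrix q
  · simpa only [submatrix_submatrix, hpq.comp_eq_id, Function.comp_id, submatrix_id_id]
      using (h.2 _ _ (hκ'.submatrix p)).submatrix q

end LeastUpperBound

end Zonotope

namespace Counterexample

noncomputable def κ₁ : Matrix (Fin 3) (Fin 4) ℝ :=
  !![1/2, 0, 1/4, 1/4; 0, 1/2, 0, 1/2; 0, 0, 1/4, 3/4]

noncomputable def κ₂ : Matrix (Fin 3) (Fin 4) ℝ :=
  !![1/2, 0, 1/4, 1/4; 0, 1/2, 1/2, 0; 0, 0, 1/4, 3/4]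

/-- Three vertices of `Z_{κ₁} ∩ Z_{κ₂}`. -/
noncomputable def vertex : Fin 3 → Fin 3 → ℝ := ![![1/2, 0, 0], ![1/2, 1/2, 0], ![3/4, 1/2, 1/4]]

def θ : Fin 3 → ℝ := ![1, 0, -1]

lemma isStochastic_κ₁ : IsStochastic κ₁ := by
  refine ⟨fun x y => ?_, fun x => ?_⟩ <;> fin_cases x <;> try fin_cases y
  all_goals norm_num [κ₁, Fin.sum_univ_four, cons_val_two, cons_val_three]

lemma isStochastic_κ₂ : IsStochastic κ₂ := by
  refine ⟨fun x y => ?_, fun x => ?_⟩ <;> fin_cases x <;> try fin_cases y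
  all_goals norm_num [κ₂, Fin.sum_univ_four, cons_val_two, cons_val_three]

lemma κ₁_mulVec (α : Fin 4 → ℝ) :
    κ₁ *ᵥ α = ![α 0 / 2 + α 2 / 4 + α 3 / 4, α 1 / 2 + α 3 / 2, α 2 / 4 + 3 / 4 * α 3] := by
  ext i; fin_cases i <;> simp [κ₁, mulVec, dotProduct, Fin.sum_univ_four, div_eq_inv_mul]

lemma κ₂_mulVec (α : Fin 4 → ℝ) :
    κ₂ *ᵥ α = ![α 0 / 2 + α 2 / 4 + α 3 / 4, α 1 / 2 + α 2 / 2, α 2 / 4 + 3 / 4 * α 3] := by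
  ext i; fin_cases i <;> simp [κ₂, mulVec, dotProduct, Fin.sum_univ_four, div_eq_inv_mul]

lemma θ_dotProduct (z : Fin 3 → ℝ) : θ ⬝ᵥ z = z 0 - z 2 := by
  simp [θ, dotProduct, Fin.sum_univ_three, sub_eq_add_neg]

lemma θ_dotProduct_vertex (i : Fin 3) : θ ⬝ᵥ vertex i = 1 / 2 := by
  rw [θ_dotProduct]
  fin_cases i <;> norm_num [vertex, cons_val_two, vecHead, vecTail]

lemma vertex_mem_zonotope_κ₁ (i : Fin 3) : vertex i ∈ zonotope κ₁ := by
  refine ⟨![![1, 0, 0, 0], ![1, 1, 0, 0], ![1, 1, 1, 0]] i, ?_, ?_⟩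
  · fin_cases i <;> simp [Pi.le_def, Fin.forall_fin_succ]
  · fin_cases i <;> norm_num [κ₁_mulVec, vertex, cons_val_two, cons_val_three, vecHead, vecTail]

lemma vertex_mem_zonotope_κ₂ (i : Fin 3) : vertex i ∈ zonotope κ₂ := by
  refine ⟨![![1, 0, 0, 0], ![1, 1, 0, 0], ![1, 0, 1, 0]] i, ?_, ?_⟩
  · fin_cases i <;> simp [Pi.le_def, Fin.forall_fin_succ]
  · fin_cases i <;> norm_num [κ₂_mulVec, vertex, cons_val_two, cons_val_three, vecHead, vecTail]

lemma θ_dotProduct_le_of_mem_zonotope_κ₁ {z : Fin 3 → ℝ} (hz : z ∈ zonotope κ₁) :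
    θ ⬝ᵥ z ≤ 1 / 2 := by
  obtain ⟨α, ⟨hα₀, hα₁⟩, rfl⟩ := hz
  rw [θ_dotProduct, κ₁_mulVec]
  simp only [cons_val]
  linarith [show 0 ≤ α 3 from hα₀ 3, show α 0 ≤ 1 from hα₁ 0]

lemma le_half_of_mem_zonotope_κ₁ {z : Fin 3 → ℝ} (hz : z ∈ zonotope κ₁)
    (hθ : θ ⬝ᵥ z = 1 / 2) : z 1 ≤ 1 / 2 := by
  obtain ⟨α, ⟨hα₀, hα₁⟩, rfl⟩ := hz
  rw [θ_dotProduct, κ₁_mulVec] at hθ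
  rw [κ₁_mulVec]
  simp only [cons_val] at hθ ⊢
  linarith [show 0 ≤ α 3 from hα₀ 3, show α 0 ≤ 1 from hα₁ 0, show α 1 ≤ 1 from hα₁ 1]

lemma two_mul_le_of_mem_zonotope_κ₂ {z : Fin 3 → ℝ} (hz : z ∈ zonotope κ₂)
    (hθ : θ ⬝ᵥ z = 1 / 2) : 2 * z 2 ≤ z 1 := by
  obtain ⟨α, ⟨hα₀, hα₁⟩, rfl⟩ := hz
  rw [θ_dotProduct, κ₂_mulVec] at hθ
  rw [κ₂_mulVec]
  simp only [cons_val] at hθ ⊢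
  linarith [show 0 ≤ α 1 from hα₀ 1, show 0 ≤ α 3 from hα₀ 3, show α 0 ≤ 1 from hα₁ 0]

lemma not_exists_reflection_center :
    ¬ ∃ m : Fin 3 → ℝ, ∀ i, 2 • m - vertex i ∈ zonotope κ₁ ∩ zonotope κ₂ ∧
      θ ⬝ᵥ (2 • m - vertex i) = 1 / 2 := by
  rintro ⟨m, hm⟩
  have h₀ := le_half_of_mem_zonotope_κ₁ (hm 0).1.1 (hm 0).2
  have h₁ := two_mul_le_of_mem_zonotope_κ₂ (hm 1).1.2 (hm 1).2
  have h₂ := (zonotope_subset_Icc isStochastic_κ₂ (hm 2).1.2).1 2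
  simp only [vertex, Pi.sub_apply, Pi.smul_apply, Pi.zero_apply, cons_val]
    at h₀ h₁ h₂
  linarith

lemma vertex_mem_Icc (i : Fin 3) : vertex i ∈ Icc 0 1 :=
  zonotope_subset_Icc isStochastic_κ₁ (vertex_mem_zonotope_κ₁ i)

lemma isMajUpperBound_κ₁ : IsMajUpperBound (fun i => dichotomy (vertex i)) κ₁ :=
  ⟨isStochastic_κ₁, fun i => (maj_dichotomy_iff isStochastic_κ₁).2 (vertex_mem_zonotope_κ₁ i)⟩

lemma isMajUpperBound_κ₂ : IsMajUpperBound (fun i => dichotomy (vertex i)) κ₂ :=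
  ⟨isStochastic_κ₂, fun i => (maj_dichotomy_iff isStochastic_κ₂).2 (vertex_mem_zonotope_κ₂ i)⟩

lemma not_exists_isMajLUB :
    ¬ ∃ (n : ℕ) (κ : Matrix (Fin 3) (Fin n) ℝ), IsMajLUB (fun i => dichotomy (vertex i)) κ := by
  rintro ⟨n, κ, ⟨hκ, hμ⟩, hleast⟩
  have hsub₁ := (hleast 4 κ₁ isMajUpperBound_κ₁).zonotope_subset
  have hsub₂ := (hleast 4 κ₂ isMajUpperBound_κ₂).zonotope_subset
  have hv : ∀ i, vertex i ∈ zonotope κ := fun i => (maj_dichotomy_iff hκ).1 (hμ i)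
  -- `θ ≤ 1/2` on `Z_{κ₁} ⊇ Z_κ`, so every vertex lies on the `θ`-maximal face of `Z_κ`
  have hmax : ∀ i, ∀ v ∈ zonotope κ, θ ⬝ᵥ v ≤ θ ⬝ᵥ vertex i := fun i v hv' =>
    (θ_dotProduct_vertex i).symm ▸ θ_dotProduct_le_of_mem_zonotope_κ₁ (hsub₁ hv')
  obtain ⟨m, hm⟩ := exists_center_of_maximal_face κ θ
  refine not_exists_reflection_center ⟨m, fun i => ?_⟩
  obtain ⟨hmem, hθ⟩ := hm _ (hv i) (hmax i)
  exact ⟨⟨hsub₁ hmem, hsub₂ hmem⟩, hθ.trans (θ_dotProduct_vertex i)⟩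

end Counterexample

theorem no_least_upper_bound {X : Type*} [Fintype X] (hX : 2 < Fintype.card X) :
    ∃ (k : ℕ) (m : Fin k → ℕ) (μ : ∀ i : Fin k, Matrix X (Fin (m i)) ℝ),
      (∀ i, IsStochastic (μ i)) ∧
      (∃ (n : ℕ) (κ : Matrix X (Fin n) ℝ), IsStochastic κ ∧ ∀ i, Maj κ (μ i)) ∧
      ¬ ∃ (n : ℕ) (κ : Matrix X (Fin n) ℝ),
          IsStochastic κ ∧ (∀ i, Maj κ (μ i)) ∧
          ∀ (n' : ℕ) (κ' : Matrix X (Fin n') ℝ),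
            IsStochastic κ' → (∀ i, Maj κ' (μ i)) → Maj κ' κ := by
  obtain ⟨q⟩ : Nonempty (Fin 3 ↪ X) :=
    Function.Embedding.nonempty_of_card_le (by simpa using hX.nat_succ_le)
  have hpq : Function.LeftInverse (Function.invFun q) q := Function.leftInverse_invFun q.injective
  refine ⟨3, fun _ => 2,
    fun i => (dichotomy (Counterexample.vertex i)).submatrix (Function.invFun q) id,
    fun i => (isStochastic_dichotomy (Counterexample.vertex_mem_Icc i)).submatrix _,
    ⟨4, _, Counterexample.isMajUpperBound_κ₁.submatrix _⟩, ?_⟩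
  rintro ⟨n, κ, hκ, hμ, hleast⟩
  exact Counterexample.not_exists_isMajLUB ⟨n, _, IsMajLUB.submatrix_of_leftInverse hpq
    ⟨⟨hκ, hμ⟩, fun n' κ' hκ' => hleast n' κ' hκ'.1 hκ'.2⟩⟩
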